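/- arXiv:2602.02986 — 2 statements merged into one kernel-verified Lean document; each statement's English description precedes it below -/
import Mathlib

section
/- (Coherence bound in the CNN memorization model, part 2.) There exist absolute constants K, K₀ > 0 with the following property. In the signal-plus-noise Hessian model, let the noise vectors ξ_1,…,ξ_{n_r+n_f} be drawn i.i.d. from N(0, σ_n² I_d), set SNR = ‖μ‖/(σ_n √d), let the retain set consist of samples 1,…,n_r and the forget set of samples n_r+1,…,n_r+n_f, fix weights C'_r, C'_f > 0 with C'_r + C'_f = 1, and set D_{rf} = C'_r H_r + C'_f H_f. Then for every δ ∈ (0,1), whenever d ≥ K₀ log((n_r + n_f)/δ), with probability at least 1 − 8δ over the noise draws, uniformly over all choices of labels, weights ℓ''_i ∈ [0,1] and indicator bits: max over pairs (r,f) of λ_max(D_{rf}) ≤ K (C'_r + C'_f) d σ_n² (SNR² + 1). -/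
open Matrix Filter Finset Set
open scoped BigOperators

noncomputable section

/-- Frobenius norm of a real square matrix. -/
def frob {n : Type*} [Fintype n] (M : Matrix n n ℝ) : ℝ :=
  Real.sqrt (∑ i, ∑ j, (M i j) ^ 2)

open Classical in
/-- The positive semidefinite square root of a matrix (junk value `0` on non-PSD input). -/
def psdSqrt {n : Type*} [Fintype n] [DecidableEq n] (A : Matrix n n ℝ) : Matrix n n ℝ :=
  if h : A.PosSemidef then
    h.1.eigenvectorUnitary.1 * diagonal ((RCLike.ofReal : ℝ → ℝ) ∘ Real.sqrt ∘ h.1.eigenvalues) *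
      (star h.1.eigenvectorUnitary : Matrix n n ℝ)
  else 0

open Classical in
/-- The largest eigenvalue of a symmetric real matrix (junk value `0` otherwise). -/
def lamMax {n : Type*} [Fintype n] [DecidableEq n] (A : Matrix n n ℝ) : ℝ :=
  if h : A.IsHermitian then ⨆ i, h.eigenvalues i else 0

/-- Probability of observing the Bernoulli(B/n) selection pattern `x`. -/
def selProb (n B : ℕ) (x : Fin n → Bool) : ℝ :=
  ∏ i, if x i then (B : ℝ) / n else 1 - (B : ℝ) / n

/-- Average Hessian of a family. -/
def Hbar {d n : ℕ} (H : Fin n → Matrix (Fin d) (Fin d) ℝ) : Matrix (Fin d) (Fin d) ℝ :=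
  (n : ℝ)⁻¹ • ∑ i, H i

/-- Mean update operator `J = I − η(1−α)H_R + ηα H_F`. -/
def Jbar {d nr nf : ℕ} (η α : ℝ) (HR : Fin nr → Matrix (Fin d) (Fin d) ℝ)
    (HF : Fin nf → Matrix (Fin d) (Fin d) ℝ) : Matrix (Fin d) (Fin d) ℝ :=
  1 - (η * (1 - α)) • Hbar HR + (η * α) • Hbar HF

/-- Random update operator for the batch-selection pattern `x`. -/
def Jop {d nr nf : ℕ} (η α : ℝ) (B : ℕ) (HR : Fin nr → Matrix (Fin d) (Fin d) ℝ)
    (HF : Fin nf → Matrix (Fin d) (Fin d) ℝ)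
    (x : (Fin nr → Bool) × (Fin nf → Bool)) : Matrix (Fin d) (Fin d) ℝ :=
  1 - (η * (1 - α) / B) • (∑ r, if x.1 r then HR r else 0)
    + (η * α / B) • (∑ f, if x.2 f then HF f else 0)

/-- `C_r = η²(1−α)²(1/n_r)(1/B − 1/n_r)`. -/
def Crc (η α : ℝ) (B nr : ℕ) : ℝ :=
  η ^ 2 * (1 - α) ^ 2 * (nr : ℝ)⁻¹ * ((B : ℝ)⁻¹ - (nr : ℝ)⁻¹)

/-- `C_f = η²α²(1/n_f)(1/B − 1/n_f)`. -/
def Cfc (η α : ℝ) (B nf : ℕ) : ℝ :=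
  η ^ 2 * α ^ 2 * (nf : ℝ)⁻¹ * ((B : ℝ)⁻¹ - (nf : ℝ)⁻¹)

/-- Noise-accumulation matrices `N_k`. -/
def Nmat {d nr nf : ℕ} (η α : ℝ) (B : ℕ) (HR : Fin nr → Matrix (Fin d) (Fin d) ℝ)
    (HF : Fin nf → Matrix (Fin d) (Fin d) ℝ) : ℕ → Matrix (Fin d) (Fin d) ℝ
  | 0 => 1
  | k + 1 =>
      Cfc η α B nf • ∑ f, HF f * Nmat η α B HR HF k * HF f
        + Crc η α B nr • ∑ r, HR r * Nmat η α B HR HF k * HR r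

/-- `W_k = J_{k−1} ⋯ J_1 J_0` for a finite sequence of batch selections. -/
def Wk {d nr nf : ℕ} (η α : ℝ) (B : ℕ) (HR : Fin nr → Matrix (Fin d) (Fin d) ℝ)
    (HF : Fin nf → Matrix (Fin d) (Fin d) ℝ) {k : ℕ}
    (s : Fin k → (Fin nr → Bool) × (Fin nf → Bool)) : Matrix (Fin d) (Fin d) ℝ :=
  (List.ofFn fun i => Jop η α B HR HF (s i)).reverse.prod

/-- `E‖w_k‖² = E Tr(W_k W_kᵀ)`, the expectation taken over the i.i.d. Bernoulli
batch selections of the `k` steps. -/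
def Ewk2 {d nr nf : ℕ} (η α : ℝ) (B : ℕ) (HR : Fin nr → Matrix (Fin d) (Fin d) ℝ)
    (HF : Fin nf → Matrix (Fin d) (Fin d) ℝ) (k : ℕ) : ℝ :=
  ∑ s : Fin k → (Fin nr → Bool) × (Fin nf → Bool),
    (∏ i, selProb nr B (s i).1 * selProb nf B (s i).2) *
      (Wk η α B HR HF s * (Wk η α B HR HF s)ᵀ).trace

/-- `E[(e₁ᵀ w_k)²]`, i.e. the `(i0,i0)` entry of `E[W_k W_kᵀ]`. -/
def Ee1 {d nr nf : ℕ} (η α : ℝ) (B : ℕ) (HR : Fin nr → Matrix (Fin d) (Fin d) ℝ)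
    (HF : Fin nf → Matrix (Fin d) (Fin d) ℝ) (i0 : Fin d) (k : ℕ) : ℝ :=
  ∑ s : Fin k → (Fin nr → Bool) × (Fin nf → Bool),
    (∏ i, selProb nr B (s i).1 * selProb nf B (s i).2) *
      ((Wk η α B HR HF s * (Wk η α B HR HF s)ᵀ) i0 i0)

/-- Mixed Hessian `D_{rf} = C'_r H_r^R + C'_f H_f^F` for a retain/forget pair. -/
def Drf {d nr nf : ℕ} (Cr' Cf' : ℝ) (HR : Fin nr → Matrix (Fin d) (Fin d) ℝ)
    (HF : Fin nf → Matrix (Fin d) (Fin d) ℝ) (p : Fin nr × Fin nf) :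
    Matrix (Fin d) (Fin d) ℝ :=
  Cr' • HR p.1 + Cf' • HF p.2

/-- Mix-Hessian `D = (1/(n_r n_f)) Σ_{r,f} D_{rf}`. -/
def Dmix {d nr nf : ℕ} (Cr' Cf' : ℝ) (HR : Fin nr → Matrix (Fin d) (Fin d) ℝ)
    (HF : Fin nf → Matrix (Fin d) (Fin d) ℝ) : Matrix (Fin d) (Fin d) ℝ :=
  ((nr : ℝ) * nf)⁻¹ • ∑ p : Fin nr × Fin nf, Drf Cr' Cf' HR HF p

/-- Mix-coherence matrix `S_{(r,f),(r',f')} = ‖D_{rf}^{1/2} D_{r'f'}^{1/2}‖_F`. -/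
def Smat {d nr nf : ℕ} (Cr' Cf' : ℝ) (HR : Fin nr → Matrix (Fin d) (Fin d) ℝ)
    (HF : Fin nf → Matrix (Fin d) (Fin d) ℝ) :
    Matrix (Fin nr × Fin nf) (Fin nr × Fin nf) ℝ :=
  Matrix.of fun p q =>
    frob (psdSqrt (Drf Cr' Cf' HR HF p) * psdSqrt (Drf Cr' Cf' HR HF q))

/-- Unlearning coherence `σ = λ_max(S) / max_{(r,f)} λ_max(D_{rf})`. -/
def cohSigma {d nr nf : ℕ} (Cr' Cf' : ℝ) (HR : Fin nr → Matrix (Fin d) (Fin d) ℝ)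
    (HF : Fin nf → Matrix (Fin d) (Fin d) ℝ) : ℝ :=
  lamMax (Smat Cr' Cf' HR HF) / ⨆ p : Fin nr × Fin nf, lamMax (Drf Cr' Cf' HR HF p)

/-- Stacked filter-weight vector of the two-layer ReLU CNN signal-plus-noise model. -/
def wvec (d mfil : ℕ) (μ ξi : Fin d → ℝ) (yi : ℝ)
    (ai bi : Bool → Fin mfil → Bool) : (Bool × Fin mfil) × Fin d → ℝ :=
  fun p =>
    ((if p.1.1 then (1 : ℝ) else -1) / mfil) *
      ((if ai p.1.1 p.1.2 then (1 : ℝ) else 0) * μ p.2 +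
        (if bi p.1.1 p.1.2 then (1 : ℝ) else 0) * yi * ξi p.2)

/-- Per-sample Hessian `H_i = ℓ''_i w_i w_iᵀ` of the signal-plus-noise model. -/
def hessCNN (d mfil : ℕ) (μ ξi : Fin d → ℝ) (yi ℓi : ℝ)
    (ai bi : Bool → Fin mfil → Bool) :
    Matrix ((Bool × Fin mfil) × Fin d) ((Bool × Fin mfil) × Fin d) ℝ :=
  ℓi • vecMulVec (wvec d mfil μ ξi yi ai bi) (wvec d mfil μ ξi yi ai bi)

/-- Mixed Hessian `D_{rf} = C'_r H_r + C'_f H_{n_r+f}` in the CNN model, with the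
retain set given by the first `n_r` samples and the forget set by the last `n_f`. -/
def DrfCNN (d mfil nr nf : ℕ) (μ : Fin d → ℝ) (ξ : Fin (nr + nf) → Fin d → ℝ)
    (y ℓ : Fin (nr + nf) → ℝ) (a b : Fin (nr + nf) → Bool → Fin mfil → Bool)
    (Cr' Cf' : ℝ) (p : Fin nr × Fin nf) :
    Matrix ((Bool × Fin mfil) × Fin d) ((Bool × Fin mfil) × Fin d) ℝ :=
  Cr' • hessCNN d mfil μ (ξ (Fin.castAdd nf p.1)) (y (Fin.castAdd nf p.1))
        (ℓ (Fin.castAdd nf p.1)) (a (Fin.castAdd nf p.1)) (b (Fin.castAdd nf p.1))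
    + Cf' • hessCNN d mfil μ (ξ (Fin.natAdd nr p.2)) (y (Fin.natAdd nr p.2))
        (ℓ (Fin.natAdd nr p.2)) (a (Fin.natAdd nr p.2)) (b (Fin.natAdd nr p.2))

/-- Mix-coherence matrix of the CNN model. -/
def SmatCNN (d mfil nr nf : ℕ) (μ : Fin d → ℝ) (ξ : Fin (nr + nf) → Fin d → ℝ)
    (y ℓ : Fin (nr + nf) → ℝ) (a b : Fin (nr + nf) → Bool → Fin mfil → Bool)
    (Cr' Cf' : ℝ) : Matrix (Fin nr × Fin nf) (Fin nr × Fin nf) ℝ :=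
  Matrix.of fun p q =>
    frob (psdSqrt (DrfCNN d mfil nr nf μ ξ y ℓ a b Cr' Cf' p) *
      psdSqrt (DrfCNN d mfil nr nf μ ξ y ℓ a b Cr' Cf' q))

/-!
Each `H_i = ℓ''_i w_i w_iᵀ` has quadratic form at most `‖w_i‖² ‖v‖²` (Cauchy–Schwarz), and
`‖w_i‖² ≤ 4 (‖μ‖² + ‖ξ_i‖²)`, so deterministically
`λ_max(D_rf) ≤ 4 (C'_r + C'_f) (‖μ‖² + max_i ‖ξ_i‖²)`.
A Chernoff bound for `‖ξ_i‖² ~ σ_n² χ²_d` at `t = 1/(4σ_n²)` gives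
`P(‖ξ_i‖² ≥ 4dσ_n²) ≤ e^{-d/2}`, and a union bound over the `n_r + n_f` samples makes all
noise norms small with probability at least `1 - δ` as soon as `d ≥ 2 log((n_r + n_f)/δ)`.
This yields the claim with `K = 16`, `K₀ = 2`.
-/

section QuadraticForms

variable {n : Type*} [Fintype n]

lemma dotProduct_vecMulVec_self_mulVec (w v : n → ℝ) :
    v ⬝ᵥ (vecMulVec w w *ᵥ v) = (w ⬝ᵥ v) ^ 2 := by
  rw [vecMulVec_mulVec, op_smul_eq_smul, dotProduct_smul, dotProduct_comm, smul_eq_mul, sq]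

lemma sq_dotProduct_le_dotProduct_self_mul (w v : n → ℝ) :
    (w ⬝ᵥ v) ^ 2 ≤ (w ⬝ᵥ w) * (v ⬝ᵥ v) := by
  simpa only [dotProduct, sq] using Finset.sum_mul_sq_le_sq_mul_sq Finset.univ w v

lemma lamMax_le_of_dotProduct_mulVec_le [DecidableEq n] {A : Matrix n n ℝ}
    (hA : A.IsHermitian) {C : ℝ} (hC : 0 ≤ C)
    (h : ∀ v, v ⬝ᵥ (A *ᵥ v) ≤ C * (v ⬝ᵥ v)) : lamMax A ≤ C := by
  rw [lamMax, dif_pos hA]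
  refine Real.iSup_le (fun i => ?_) hC
  have hu : ⇑(hA.eigenvectorBasis i) ⬝ᵥ ⇑(hA.eigenvectorBasis i) = 1 := by
    have := real_inner_self_eq_norm_sq (hA.eigenvectorBasis i)
    rw [hA.eigenvectorBasis.orthonormal.1 i, EuclideanSpace.inner_eq_star_dotProduct] at this
    simpa using this
  simpa [hu, hA.mulVec_eigenvectorBasis i, dotProduct_smul] using h (hA.eigenvectorBasis i)

end QuadraticForms

section CNNHessian

variable {d mfil : ℕ} (μ ξi : Fin d → ℝ) {yi ℓi : ℝ} (ai bi : Bool → Fin mfil → Bool)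

lemma wvec_sq_le (hy : yi = 1 ∨ yi = -1) (p : (Bool × Fin mfil) × Fin d) :
    wvec d mfil μ ξi yi ai bi p ^ 2 ≤ (mfil : ℝ)⁻¹ ^ 2 * (2 * (μ p.2 ^ 2 + ξi p.2 ^ 2)) := by
  have hsign : (if p.1.1 then (1 : ℝ) else -1) ^ 2 = 1 := by split_ifs <;> norm_num
  have hy2 : yi ^ 2 = 1 := by rcases hy with rfl | rfl <;> norm_num
  rw [wvec, mul_pow, div_pow, hsign, one_div, inv_pow]
  gcongr
  split_ifs <;>
    nlinarith [add_sq_le (a := μ p.2) (b := yi * ξi p.2), sq_nonneg (μ p.2), sq_nonneg (ξi p.2)]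

lemma wvec_dotProduct_self_le (hy : yi = 1 ∨ yi = -1) :
    wvec d mfil μ ξi yi ai bi ⬝ᵥ wvec d mfil μ ξi yi ai bi ≤ 4 * (μ ⬝ᵥ μ + ξi ⬝ᵥ ξi) := by
  have hsum : ∑ p : (Bool × Fin mfil) × Fin d,
      (mfil : ℝ)⁻¹ ^ 2 * (2 * (μ p.2 ^ 2 + ξi p.2 ^ 2))
        = 4 * (mfil : ℝ)⁻¹ * (μ ⬝ᵥ μ + ξi ⬝ᵥ ξi) := by
    simp only [Fintype.sum_prod_type, Finset.sum_const, Finset.card_univ, Fintype.card_prod,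
      Fintype.card_bool, Fintype.card_fin, nsmul_eq_mul]
    rcases Nat.eq_zero_or_pos mfil with rfl | hm
    · simp
    · simp only [dotProduct, ← sq, ← Finset.mul_sum, Finset.sum_add_distrib]
      field_simp
      push_cast
      ring
  calc wvec d mfil μ ξi yi ai bi ⬝ᵥ wvec d mfil μ ξi yi ai bi
      ≤ ∑ p : (Bool × Fin mfil) × Fin d, (mfil : ℝ)⁻¹ ^ 2 * (2 * (μ p.2 ^ 2 + ξi p.2 ^ 2)) := by
        simpa only [dotProduct, ← sq] using
          Finset.sum_le_sum fun p _ => wvec_sq_le μ ξi ai bi hy p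
    _ = 4 * (mfil : ℝ)⁻¹ * (μ ⬝ᵥ μ + ξi ⬝ᵥ ξi) := hsum
    _ ≤ 4 * (μ ⬝ᵥ μ + ξi ⬝ᵥ ξi) := by
        have : 0 ≤ μ ⬝ᵥ μ + ξi ⬝ᵥ ξi :=
          add_nonneg (dotProduct_self_star_nonneg μ) (dotProduct_self_star_nonneg ξi)
        nlinarith [Nat.cast_inv_le_one (α := ℝ) mfil]


lemma isHermitian_hessCNN : (hessCNN d mfil μ ξi yi ℓi ai bi).IsHermitian := by
  have h := (posSemidef_vecMulVec_self_star (wvec d mfil μ ξi yi ai bi)).isHermitian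
  rw [star_trivial] at h
  exact h.smul (IsSelfAdjoint.all ℓi)

lemma dotProduct_hessCNN_mulVec_le (hy : yi = 1 ∨ yi = -1) (hℓ : ℓi ∈ Set.Icc (0 : ℝ) 1)
    (v : (Bool × Fin mfil) × Fin d → ℝ) :
    v ⬝ᵥ (hessCNN d mfil μ ξi yi ℓi ai bi *ᵥ v) ≤ 4 * (μ ⬝ᵥ μ + ξi ⬝ᵥ ξi) * (v ⬝ᵥ v) := by
  set w := wvec d mfil μ ξi yi ai bi
  rw [hessCNN, smul_mulVec, dotProduct_smul, dotProduct_vecMulVec_self_mulVec, smul_eq_mul]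
  calc ℓi * (w ⬝ᵥ v) ^ 2 ≤ (w ⬝ᵥ v) ^ 2 := mul_le_of_le_one_left (sq_nonneg _) hℓ.2
    _ ≤ (w ⬝ᵥ w) * (v ⬝ᵥ v) := sq_dotProduct_le_dotProduct_self_mul w v
    _ ≤ 4 * (μ ⬝ᵥ μ + ξi ⬝ᵥ ξi) * (v ⬝ᵥ v) :=
        mul_le_mul_of_nonneg_right (wvec_dotProduct_self_le μ ξi ai bi hy)
          (dotProduct_self_star_nonneg v)

end CNNHessian

lemma lamMax_DrfCNN_le {d mfil nr nf : ℕ} (μ : Fin d → ℝ) (ξ : Fin (nr + nf) → Fin d → ℝ)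
    {y ℓ : Fin (nr + nf) → ℝ} (a b : Fin (nr + nf) → Bool → Fin mfil → Bool)
    {Cr' Cf' R : ℝ} (hCr : 0 ≤ Cr') (hCf : 0 ≤ Cf')
    (hy : ∀ i, y i = 1 ∨ y i = -1) (hℓ : ∀ i, ℓ i ∈ Set.Icc (0 : ℝ) 1)
    (hξ : ∀ i, ξ i ⬝ᵥ ξ i ≤ R) (p : Fin nr × Fin nf) :
    lamMax (DrfCNN d mfil nr nf μ ξ y ℓ a b Cr' Cf' p) ≤ 4 * (Cr' + Cf') * (μ ⬝ᵥ μ + R) := by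
  have hR : 0 ≤ μ ⬝ᵥ μ + R := add_nonneg (dotProduct_self_star_nonneg μ)
    ((dotProduct_self_star_nonneg _).trans (hξ (Fin.castAdd nf p.1)))
  refine lamMax_le_of_dotProduct_mulVec_le
    (((isHermitian_hessCNN _ _ _ _).smul (IsSelfAdjoint.all Cr')).add
      ((isHermitian_hessCNN _ _ _ _).smul (IsSelfAdjoint.all Cf')))
    (by positivity) fun v => ?_
  have hbound : ∀ k, v ⬝ᵥ (hessCNN d mfil μ (ξ k) (y k) (ℓ k) (a k) (b k) *ᵥ v)
      ≤ 4 * (μ ⬝ᵥ μ + R) * (v ⬝ᵥ v) := fun k =>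
    (dotProduct_hessCNN_mulVec_le μ (ξ k) (a k) (b k) (hy k) (hℓ k) v).trans <| by
      gcongr
      · exact dotProduct_self_star_nonneg v
      · exact hξ k
  rw [add_mulVec, smul_mulVec, smul_mulVec, dotProduct_add, dotProduct_smul,
    dotProduct_smul, smul_eq_mul, smul_eq_mul]
  nlinarith [mul_le_mul_of_nonneg_left (hbound (Fin.castAdd nf p.1)) hCr,
    mul_le_mul_of_nonneg_left (hbound (Fin.natAdd nr p.2)) hCf]

lemma mul_sq_snr_add_one {d : ℕ} (μ : Fin d → ℝ) {σ : ℝ} (hσ : σ ≠ 0) :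
    d * σ ^ 2 * ((Real.sqrt (∑ c, μ c ^ 2) / (σ * Real.sqrt d)) ^ 2 + 1)
      = μ ⬝ᵥ μ + d * σ ^ 2 := by
  rcases Nat.eq_zero_or_pos d with rfl | hd
  · simp
  · rw [div_pow, mul_pow, Real.sq_sqrt (by positivity), Real.sq_sqrt (by positivity)]
    simp only [dotProduct, ← sq]
    field_simp

section GaussianChiSquare

open MeasureTheory ProbabilityTheory Real
open scoped ENNReal NNReal

variable {Ω : Type*} [MeasurableSpace Ω] {P : Measure Ω} {v : ℝ≥0}

-- For `1 ≤ 2 * t * v` both sides are junk `0`.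
lemma integral_exp_mul_sq_gaussianReal (hv : v ≠ 0) (t : ℝ) :
    ∫ x, exp (t * x ^ 2) ∂gaussianReal 0 v = (√(1 - 2 * t * v))⁻¹ := by
  have hdensity : ∀ x, gaussianPDFReal 0 v x • exp (t * x ^ 2)
      = (√(2 * π * v))⁻¹ * exp (-((1 - 2 * t * v) / (2 * v)) * x ^ 2) := by
    intro x
    rw [gaussianPDFReal, smul_eq_mul, mul_assoc, ← exp_add]
    congr 2
    field_simp
    ring
  rw [integral_gaussianReal_eq_integral_smul hv]
  simp_rw [hdensity]
  rw [integral_const_mul, integral_gaussian, ← sqrt_inv, ← sqrt_inv, ← sqrt_mul (by positivity)]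
  congr 1
  field_simp

lemma mgf_sq_of_map_eq_gaussianReal {X : Ω → ℝ} (hX : P.map X = gaussianReal 0 v) (hv : v ≠ 0)
    (t : ℝ) :
    mgf (fun ω => X ω ^ 2) P t = (√(1 - 2 * t * v))⁻¹ := by
  have hXm : AEMeasurable X P := AEMeasurable.of_map_ne_zero (by simp [hX, NeZero.ne])
  rw [← integral_exp_mul_sq_gaussianReal hv t, ← hX]
  exact (mgf_map (X := fun x => x ^ 2) hXm (by fun_prop)).symm

-- Chernoff at `t = 1/(4v)`, where each summand has mgf `√2 ≤ e^{1/2}`.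
theorem measure_four_mul_card_le_sum_sq_le [IsProbabilityMeasure P] {ι : Type*} [Fintype ι]
    {X : ι → Ω → ℝ} (hv : v ≠ 0) (hindep : iIndepFun X P)
    (hX : ∀ i, P.map (X i) = gaussianReal 0 v) :
    P {ω | 4 * Fintype.card ι * v ≤ ∑ i, X i ω ^ 2}
      ≤ ENNReal.ofReal (exp (-(Fintype.card ι / 2))) := by
  set n := Fintype.card ι
  set t : ℝ := (4 * v)⁻¹
  have htv : t * v = 4⁻¹ := by
    simp only [t]; field_simp
  set Y : ι → Ω → ℝ := fun i ω => X i ω ^ 2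
  have hYindep : iIndepFun Y P := hindep.comp (fun _ x => x ^ 2) fun _ => by fun_prop
  have hYm : ∀ i, AEMeasurable (Y i) P :=
    fun i => (AEMeasurable.of_map_ne_zero (by simp [hX i, NeZero.ne])).pow_const 2
  have hmgf_i : ∀ i, mgf (Y i) P t = √2 := fun i => by
    rw [mgf_sq_of_map_eq_gaussianReal (hX i) hv t,
      show 1 - 2 * t * v = 2⁻¹ by linear_combination -2 * htv, sqrt_inv, inv_inv]
  have hmgf : mgf (∑ i, Y i) P t = √2 ^ n := by
    rw [hYindep.mgf_sum₀ hYm, Finset.prod_congr rfl fun i _ => hmgf_i i, Finset.prod_const,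
      Finset.card_univ]
  have hint : Integrable (fun ω => exp (t * (∑ i, Y i) ω)) P :=
    mgf_pos_iff.mp (hmgf ▸ by positivity)
  have hsqrt_two : √2 ^ n ≤ exp (n / 2) := by
    rw [div_eq_mul_one_div, exp_nat_mul, exp_half]
    gcongr
    linarith [add_one_le_exp 1]
  have hchernoff := measure_ge_le_exp_mul_mgf (4 * n * v) (by positivity) hint
  rw [hmgf] at hchernoff
  simp only [Finset.sum_apply] at hchernoff
  rw [← ENNReal.ofReal_toReal (measure_ne_top P _)]
  refine ENNReal.ofReal_le_ofReal (hchernoff.trans ?_)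
  calc exp (-t * (4 * n * v)) * √2 ^ n ≤ exp (-n) * exp (n / 2) := by
        rw [show -t * (4 * n * v) = -n by linear_combination (-4 * n : ℝ) * htv]
        gcongr
    _ = exp (-(n / 2)) := by rw [← exp_add]; ring_nf

lemma natCast_mul_exp_neg_half_le {N : ℕ} {δ x : ℝ} (hδ : 0 < δ) (h : 2 * log (N / δ) ≤ x) :
    N * exp (-(x / 2)) ≤ δ := by
  rcases Nat.eq_zero_or_pos N with rfl | hN
  · simpa using hδ.le
  · calc N * exp (-(x / 2)) ≤ N * exp (-log (N / δ)) := by gcongr; linarith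
      _ = δ := by rw [exp_neg, exp_log (by positivity)]; field_simp

lemma ofReal_one_sub_le_of_measure_compl_le [IsProbabilityMeasure P] {s : Set Ω} {δ : ℝ}
    (hδ : 0 ≤ δ) (h : P sᶜ ≤ ENNReal.ofReal δ) : ENNReal.ofReal (1 - δ) ≤ P s := by
  rw [ENNReal.ofReal_sub _ hδ, ENNReal.ofReal_one, tsub_le_iff_right]
  calc 1 = P (s ∪ sᶜ) := by rw [Set.union_compl_self, measure_univ]
    _ ≤ P s + P sᶜ := measure_union_le _ _
    _ ≤ P s + ENNReal.ofReal δ := by gcongr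

theorem ofReal_one_sub_le_measure_forall_sum_sq_lt [IsProbabilityMeasure P] {κ ι : Type*}
    [Fintype κ] [Fintype ι] {ξ : κ → ι → Ω → ℝ} (hv : v ≠ 0)
    (hindep : iIndepFun (fun p : κ × ι => ξ p.1 p.2) P)
    (hξ : ∀ k i, P.map (ξ k i) = gaussianReal 0 v) {δ : ℝ} (hδ : 0 < δ)
    (hcard : 2 * log (Fintype.card κ / δ) ≤ Fintype.card ι) :
    ENNReal.ofReal (1 - δ) ≤ P {ω | ∀ k, ∑ i, ξ k i ω ^ 2 < 4 * Fintype.card ι * v} := by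
  refine ofReal_one_sub_le_of_measure_compl_le hδ.le ?_
  have hrow : ∀ k, iIndepFun (ξ k) P := fun k =>
    hindep.precomp (g := fun i => (k, i)) fun i j h => (Prod.mk.inj h).2
  calc P {ω | ∀ k, ∑ i, ξ k i ω ^ 2 < 4 * Fintype.card ι * v}ᶜ
      = P (⋃ k, {ω | 4 * Fintype.card ι * v ≤ ∑ i, ξ k i ω ^ 2}) := by
        congr 1; ext ω; simp
    _ ≤ ∑ k, P {ω | 4 * Fintype.card ι * v ≤ ∑ i, ξ k i ω ^ 2} := measure_iUnion_fintype_le _ _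
    _ ≤ ∑ _k : κ, ENNReal.ofReal (exp (-(Fintype.card ι / 2))) := by
        gcongr with k
        exact measure_four_mul_card_le_sum_sq_le hv (hrow k) (hξ k)
    _ = ENNReal.ofReal (Fintype.card κ * exp (-(Fintype.card ι / 2))) := by
        rw [Finset.sum_const, Finset.card_univ, nsmul_eq_mul, ENNReal.ofReal_mul (by positivity),
          ENNReal.ofReal_natCast]
    _ ≤ ENNReal.ofReal δ := ENNReal.ofReal_le_ofReal (natCast_mul_exp_neg_half_le hδ hcard)

end GaussianChiSquare

open MeasureTheory ProbabilityTheory in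
/-- coherence bound in the CNN memorization model, part 2.
There are absolute constants `K, K₀ > 0` such that, with i.i.d. `N(0, σ_n² I_d)` noise,
for every `δ ∈ (0,1)`, whenever `d ≥ K₀ log((n_r+n_f)/δ)`, with probability at least
`1 − 8δ`, uniformly over labels, weights and indicator bits,
`max_{(r,f)} λ_max(D_{rf}) ≤ K (C'_r + C'_f) d σ_n² (SNR² + 1)`. -/
theorem stmt6 :
    ∃ K K₀ : ℝ, 0 < K ∧ 0 < K₀ ∧
      ∀ (d nr nf mfil : ℕ), 1 ≤ mfil →
      ∀ (μ : Fin d → ℝ) (σn : ℝ), 0 < σn →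
      ∀ (Cr' Cf' : ℝ), 0 < Cr' → 0 < Cf' → Cr' + Cf' = 1 →
      ∀ δ : ℝ, δ ∈ Set.Ioo (0 : ℝ) 1 →
      K₀ * Real.log (((nr : ℝ) + nf) / δ) ≤ (d : ℝ) →
      ∀ (Ω : Type) (_ : MeasurableSpace Ω) (P : Measure Ω), IsProbabilityMeasure P →
      ∀ ξ : Fin (nr + nf) → Fin d → Ω → ℝ,
        iIndepFun
          (fun (p : Fin (nr + nf) × Fin d) ω => ξ p.1 p.2 ω) P →
        (∀ i c, Measure.map (ξ i c) P = gaussianReal 0 ⟨σn ^ 2, sq_nonneg σn⟩) →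
        ENNReal.ofReal (1 - 8 * δ) ≤
          P {ω | ∀ (y ℓ : Fin (nr + nf) → ℝ)
              (a b : Fin (nr + nf) → Bool → Fin mfil → Bool),
              (∀ i, y i = 1 ∨ y i = -1) → (∀ i, ℓ i ∈ Set.Icc (0 : ℝ) 1) →
              ∀ p : Fin nr × Fin nf,
                lamMax (DrfCNN d mfil nr nf μ (fun i c => ξ i c ω) y ℓ a b Cr' Cf' p) ≤
                  K * (Cr' + Cf') * d * σn ^ 2 *
                    ((Real.sqrt (∑ c, (μ c) ^ 2) / (σn * Real.sqrt d)) ^ 2 + 1)} := by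
  refine ⟨16, 2, by norm_num, by norm_num, ?_⟩
  intro d nr nf mfil _ μ σn hσ Cr' Cf' hCr hCf _ δ hδ hd Ω _ P _ ξ hindep hξ
  have hv : (⟨σn ^ 2, sq_nonneg σn⟩ : NNReal) ≠ 0 := by simp [hσ.ne']
  have hnoise := ofReal_one_sub_le_measure_forall_sum_sq_lt hv hindep hξ hδ.1
    (by simpa using hd)
  refine (ENNReal.ofReal_le_ofReal (by linarith [hδ.1])).trans (hnoise.trans (measure_mono ?_))
  intro ω hω y ℓ a b hy hℓ p
  simp only [Set.mem_ofPred_eq, Fintype.card_fin] at hω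
  have hnorm : ∀ i, (fun c => ξ i c ω) ⬝ᵥ (fun c => ξ i c ω) ≤ 4 * d * σn ^ 2 := fun i => by
    simp only [dotProduct, ← sq]
    exact (hω i).le
  calc _ ≤ 4 * (Cr' + Cf') * (μ ⬝ᵥ μ + 4 * d * σn ^ 2) :=
        lamMax_DrfCNN_le μ _ a b hCr.le hCf.le hy hℓ hnorm p
    _ ≤ 16 * (Cr' + Cf') * (μ ⬝ᵥ μ + d * σn ^ 2) := by
        have : 0 ≤ μ ⬝ᵥ μ := dotProduct_self_star_nonneg μ
        nlinarith
    _ = _ := by rw [← mul_sq_snr_add_one μ hσ.ne']; ring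
end
end

section
/- (Verification of the matching-lower-bound construction.) Fix d ≥ 1, η > 0, α ∈ [0,1), sizes n_r, n_f ≥ 1, batch size B with 0 < B < n_r and B ≤ n_f, a positive integer q ≤ n_r, and λ > 0; set σ = q n_f and m = λ n_r n_f / (C'_r σ). Define H_r^R = m e_1 e_1ᵀ for r = 1,…,q and H_r^R = 0 for r > q, and H_f^F = 0 for all f. Then: (i) the mix-Hessian satisfies D = λ e_1 e_1ᵀ, so λ_max(D) = λ; (ii) max_{(r,f)} λ_max(D_{rf}) = C'_r m; (iii) the mix-coherence matrix S has entries C'_r m at pairs ((r,f),(r',f')) with r, r' ≤ q and 0 elsewhere, and λ_max(S) = q n_f C'_r m; hence (iv) the unlearning coherence λ_max(S)/max_{(r,f)} λ_max(D_{rf}) equals σ. -/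
open Matrix Filter Finset Set
open scoped BigOperators

noncomputable section

/-!
Every mixed Hessian `D_{rf}` is either `c e₁e₁ᵀ` (for `r < q`) or `0`, where
`c = C'_r m = λ n_r n_f / σ`. A nonzero symmetric matrix with `A² = c A` has all its
eigenvalues in `{0, c}`, hence `λ_max A = c`. This applies to `c e₁e₁ᵀ` and also to `S`:
by uniqueness of the PSD square root, `D_{rf}^{1/2}` is `√c e₁e₁ᵀ` or `0`, so `S` is the
constant `c` on the `σ × σ` block of retained pairs and zero elsewhere, whence `S² = σ c S`.
-/

open scoped MatrixOrder

lemma posSemidef_single {n : Type*} [DecidableEq n] (i : n) {c : ℝ} (hc : 0 ≤ c) :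
    (single i i c).PosSemidef :=
  diagonal_single i c ▸ PosSemidef.diagonal (Pi.single_nonneg.mpr hc)

lemma frob_zero {n : Type*} [Fintype n] : frob (0 : Matrix n n ℝ) = 0 := by
  simp [frob]

section LargestEigenvalue

variable {n : Type*} [Fintype n] [DecidableEq n]

lemma lamMax_zero : lamMax (0 : Matrix n n ℝ) = 0 := by
  have h0 : (0 : Matrix n n ℝ).IsHermitian := isHermitian_zero
  rw [lamMax, dif_pos h0, h0.eigenvalues_eq_zero_iff.mpr rfl]
  exact Real.iSup_const_zero

lemma Matrix.IsHermitian.eigenvalues_mul_self_eq {A : Matrix n n ℝ} (hA : A.IsHermitian)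
    {c : ℝ} (h : A * A = c • A) (i : n) :
    hA.eigenvalues i * hA.eigenvalues i = c * hA.eigenvalues i := by
  set v : n → ℝ := ⇑(hA.eigenvectorBasis i)
  have hv : v ≠ 0 := (WithLp.ofLp_eq_zero 2).ne.2 (hA.eigenvectorBasis.orthonormal.ne_zero i)
  have hAv : A *ᵥ v = hA.eigenvalues i • v := hA.mulVec_eigenvectorBasis i
  refine smul_left_injective ℝ hv ?_
  calc (hA.eigenvalues i * hA.eigenvalues i) • v = A *ᵥ (A *ᵥ v) := by
        rw [hAv, mulVec_smul, hAv, mul_smul]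
    _ = (c * hA.eigenvalues i) • v := by
        rw [mulVec_mulVec, h, smul_mulVec, hAv, mul_smul]

lemma lamMax_eq_of_mul_self_eq_smul {A : Matrix n n ℝ} (hA : A.IsHermitian) (hA0 : A ≠ 0)
    {c : ℝ} (hc : 0 ≤ c) (h : A * A = c • A) : lamMax A = c := by
  have hval (i : n) : hA.eigenvalues i = c ∨ hA.eigenvalues i = 0 :=
    mul_eq_mul_right_iff.mp (hA.eigenvalues_mul_self_eq h i)
  obtain ⟨i, hi⟩ : ∃ i, hA.eigenvalues i ≠ 0 := by
    by_contra! h0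
    exact hA0 (hA.eigenvalues_eq_zero_iff.mp (funext h0))
  have : Nonempty n := ⟨i⟩
  rw [lamMax, dif_pos hA]
  refine le_antisymm (ciSup_le fun j => ?_) ?_
  · rcases hval j with h1 | h1 <;> rw [h1]
    exact hc
  · exact (hval i).resolve_right hi ▸ le_ciSup (Finite.bddAbove_range _) i

lemma lamMax_single (i : n) {c : ℝ} (hc : 0 ≤ c) : lamMax (single i i c) = c := by
  rcases hc.eq_or_lt with rfl | hc'
  · rw [single_zero, lamMax_zero]
  · refine lamMax_eq_of_mul_self_eq_smul (posSemidef_single i hc).1 ?_ hc ?_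
    · exact fun h0 => hc'.ne' (by simpa using congrFun (congrFun h0 i) i)
    · rw [single_mul_single_same, smul_single, smul_eq_mul]

lemma lamMax_const_block (P : n → Prop) [DecidablePred P] (hP : ∃ i, P i) {c : ℝ} (hc : 0 < c) :
    lamMax (of fun i j => if P i ∧ P j then c else 0) = #{i | P i} * c := by
  refine lamMax_eq_of_mul_self_eq_smul ?_ ?_ (by positivity) ?_
  · ext i j
    simp [and_comm]
  · obtain ⟨i, hi⟩ := hP
    intro h
    simpa [hi, hc.ne'] using congrFun (congrFun h i) i
  · ext i j
    simp only [mul_apply, of_apply, Matrix.smul_apply, smul_eq_mul]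
    by_cases hi : P i <;> by_cases hj : P j <;>
      simp [hi, hj, Finset.sum_ite, Finset.filter_filter, mul_assoc]

end LargestEigenvalue

section SquareRoot

variable {n : Type*} [Fintype n] [DecidableEq n]

lemma psdSqrt_eq_sqrt {A : Matrix n n ℝ} (hA : A.PosSemidef) : psdSqrt A = CFC.sqrt A := by
  rw [CFC.sqrt_eq_cfc, cfc_nnreal_eq_real _ A, hA.1.cfc_eq, psdSqrt, dif_pos hA]
  simp only [IsHermitian.cfc, Unitary.conjStarAlgAut_apply]
  congr 3
  funext i
  simp [hA.eigenvalues_nonneg i]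

lemma psdSqrt_eq_of_mul_self {A B : Matrix n n ℝ} (hB : B.PosSemidef) (h : B * B = A) :
    psdSqrt A = B := by
  have hA : A.PosSemidef := by
    rw [← h]
    nth_rewrite 1 [← hB.1.eq]
    exact posSemidef_conjTranspose_mul_self B
  rw [psdSqrt_eq_sqrt hA]
  exact CFC.sqrt_unique h hB.nonneg

lemma psdSqrt_zero : psdSqrt (0 : Matrix n n ℝ) = 0 :=
  psdSqrt_eq_of_mul_self PosSemidef.zero (mul_zero _)

lemma psdSqrt_single (i : n) {c : ℝ} (hc : 0 ≤ c) :
    psdSqrt (single i i c) = single i i (Real.sqrt c) :=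
  psdSqrt_eq_of_mul_self (posSemidef_single i (Real.sqrt_nonneg c))
    (by rw [single_mul_single_same, Real.mul_self_sqrt hc])

lemma frob_single (i j : n) (c : ℝ) : frob (single i j c) = |c| := by
  rw [frob, ← Real.sqrt_sq_eq_abs]
  congr 1
  simp [single_apply, ite_pow, ite_and]

end SquareRoot

lemma ciSup_ite_zero_eq {ι : Type*} [Finite ι] (P : ι → Prop) [DecidablePred P]
    (hP : ∃ i, P i) {c : ℝ} (hc : 0 ≤ c) : (⨆ i, if P i then c else 0) = c := by
  obtain ⟨i, hi⟩ := hP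
  have : Nonempty ι := ⟨i⟩
  refine le_antisymm (ciSup_le fun j => ?_) ?_
  · split_ifs <;> simp [hc]
  · simpa [hi] using le_ciSup (Finite.bddAbove_range fun j => if P j then c else (0 : ℝ)) i

lemma card_filter_fst_val_lt (a b q : ℕ) :
    #{p : Fin a × Fin b | (p.1 : ℕ) < q} = min a q * b := by
  have : ({p : Fin a × Fin b | (p.1 : ℕ) < q} : Finset _)
      = ({i : Fin a | (i : ℕ) < q} : Finset _) ×ˢ (Finset.univ : Finset (Fin b)) := by
    ext p
    simp
  rw [this, card_product, Fin.card_filter_val_lt, Finset.card_univ, Fintype.card_fin]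

theorem stmt19_general (d nr nf B qn : ℕ) (hd : 0 < d) (hnf : 1 ≤ nf) (hq : 1 ≤ qn) (hqn : qn ≤ nr)
    (η α : ℝ) (hCr : 0 < Crc η α B nr) (lam : ℝ) (hlam : 0 < lam) :
    let Cr' : ℝ := Real.sqrt (Crc η α B nr) /
      (Real.sqrt (Crc η α B nr) + Real.sqrt (Cfc η α B nf))
    let Cf' : ℝ := Real.sqrt (Cfc η α B nf) /
      (Real.sqrt (Crc η α B nr) + Real.sqrt (Cfc η α B nf))
    let σ : ℝ := (qn : ℝ) * nf
    let m : ℝ := lam * nr * nf / (Cr' * σ)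
    let HRd : Fin nr → Matrix (Fin d) (Fin d) ℝ := fun r =>
      if (r : ℕ) < qn then Matrix.single (⟨0, hd⟩ : Fin d) (⟨0, hd⟩ : Fin d) m else 0
    let HFd : Fin nf → Matrix (Fin d) (Fin d) ℝ := fun _ => 0
    Dmix Cr' Cf' HRd HFd
        = Matrix.single (⟨0, hd⟩ : Fin d) (⟨0, hd⟩ : Fin d) lam ∧
      lamMax (Dmix Cr' Cf' HRd HFd) = lam ∧
      (⨆ p : Fin nr × Fin nf, lamMax (Drf Cr' Cf' HRd HFd p)) = Cr' * m ∧
      (∀ p p' : Fin nr × Fin nf,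
        Smat Cr' Cf' HRd HFd p p' =
          if (p.1 : ℕ) < qn ∧ (p'.1 : ℕ) < qn then Cr' * m else 0) ∧
      lamMax (Smat Cr' Cf' HRd HFd) = (qn : ℝ) * nf * (Cr' * m) ∧
      cohSigma Cr' Cf' HRd HFd = σ := by
  intro Cr' Cf' σ m HRd HFd
  set e : Fin d := ⟨0, hd⟩
  set c := Cr' * m
  have hCr' : 0 < Cr' := div_pos (Real.sqrt_pos.mpr hCr) (by positivity)
  have hσ : 0 < σ := by unfold σ; positivity
  have hnr : (0 : ℝ) < nr := by exact_mod_cast (by omega : 0 < nr)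
  have hcσ : σ * c = lam * nr * nf := by unfold c m; field_simp
  have hc : 0 < c := pos_of_mul_pos_right (hcσ ▸ by positivity) hσ.le
  have hretain : ∃ p : Fin nr × Fin nf, (p.1 : ℕ) < qn := ⟨(⟨0, by omega⟩, ⟨0, by omega⟩), hq⟩
  have hcard : (#{p : Fin nr × Fin nf | (p.1 : ℕ) < qn} : ℝ) = σ := by
    rw [card_filter_fst_val_lt, min_eq_right hqn]
    push_cast
    rfl
  have hDrf (p : Fin nr × Fin nf) :
      Drf Cr' Cf' HRd HFd p = if (p.1 : ℕ) < qn then single e e c else 0 := by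
    simp only [Drf, HRd, HFd, smul_ite, smul_single, smul_zero, add_zero, smul_eq_mul, c]
    rfl
  have hD : Dmix Cr' Cf' HRd HFd = single e e lam := by
    simp only [Dmix, hDrf, Finset.sum_ite, sum_const_zero, add_zero, sum_const]
    rw [← Nat.cast_smul_eq_nsmul ℝ, hcard, smul_smul, smul_single, smul_eq_mul, mul_assoc, hcσ]
    congr 1
    field_simp
  have hsup : (⨆ p : Fin nr × Fin nf, lamMax (Drf Cr' Cf' HRd HFd p)) = c := by
    simp only [hDrf, apply_ite lamMax, lamMax_single e hc.le, lamMax_zero]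
    exact ciSup_ite_zero_eq _ hretain hc.le
  have hS : Smat Cr' Cf' HRd HFd
      = of fun p p' => if (p.1 : ℕ) < qn ∧ (p'.1 : ℕ) < qn then c else 0 := by
    ext p p'
    simp only [Smat, of_apply, hDrf, apply_ite psdSqrt, psdSqrt_single e hc.le, psdSqrt_zero]
    by_cases h : (p.1 : ℕ) < qn <;> by_cases h' : (p'.1 : ℕ) < qn <;>
      simp [h, h', single_mul_single_same, Real.mul_self_sqrt hc.le, frob_single, abs_of_pos hc,
        frob_zero]
  have hlamS : lamMax (Smat Cr' Cf' HRd HFd) = σ * c := by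
    rw [hS, lamMax_const_block _ hretain hc, hcard]
  refine ⟨hD, hD ▸ lamMax_single e hlam.le, hsup, fun p p' => by rw [hS, of_apply], hlamS, ?_⟩
  rw [cohSigma, hlamS, hsup, mul_div_cancel_right₀ _ hc.ne']

/-- verification of the matching-lower-bound construction.  With
`H_r^R = m e₁e₁ᵀ` for `r ≤ q` (zero otherwise), all forget Hessians zero, `σ = q n_f`
and `m = λ n_r n_f/(C'_r σ)`: (i) `D = λ e₁e₁ᵀ` and `λ_max(D) = λ`;
(ii) `max_{(r,f)} λ_max(D_{rf}) = C'_r m`; (iii) `S` has entries `C'_r m` at pairs with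
`r, r' ≤ q` and `0` elsewhere, with `λ_max(S) = q n_f C'_r m`; hence (iv) the
unlearning coherence equals `σ`. -/
theorem stmt19 (d nr nf B qn : ℕ) (hd : 0 < d) (hnr : 1 ≤ nr) (hnf : 1 ≤ nf)
    (hB : 0 < B) (hBr : B < nr) (hBf : B ≤ nf) (hq : 1 ≤ qn) (hqn : qn ≤ nr)
    (η α : ℝ) (hη : 0 < η) (hα : α ∈ Set.Ico (0 : ℝ) 1)
    (hCr : 0 < Crc η α B nr) (hCf : 0 ≤ Cfc η α B nf)
    (lam : ℝ) (hlam : 0 < lam) :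
    let Cr' : ℝ := Real.sqrt (Crc η α B nr) /
      (Real.sqrt (Crc η α B nr) + Real.sqrt (Cfc η α B nf))
    let Cf' : ℝ := Real.sqrt (Cfc η α B nf) /
      (Real.sqrt (Crc η α B nr) + Real.sqrt (Cfc η α B nf))
    let σ : ℝ := (qn : ℝ) * nf
    let m : ℝ := lam * nr * nf / (Cr' * σ)
    let HRd : Fin nr → Matrix (Fin d) (Fin d) ℝ := fun r =>
      if (r : ℕ) < qn then Matrix.single (⟨0, hd⟩ : Fin d) (⟨0, hd⟩ : Fin d) m else 0
    let HFd : Fin nf → Matrix (Fin d) (Fin d) ℝ := fun _ => 0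
    Dmix Cr' Cf' HRd HFd
        = Matrix.single (⟨0, hd⟩ : Fin d) (⟨0, hd⟩ : Fin d) lam ∧
      lamMax (Dmix Cr' Cf' HRd HFd) = lam ∧
      (⨆ p : Fin nr × Fin nf, lamMax (Drf Cr' Cf' HRd HFd p)) = Cr' * m ∧
      (∀ p p' : Fin nr × Fin nf,
        Smat Cr' Cf' HRd HFd p p' =
          if (p.1 : ℕ) < qn ∧ (p'.1 : ℕ) < qn then Cr' * m else 0) ∧
      lamMax (Smat Cr' Cf' HRd HFd) = (qn : ℝ) * nf * (Cr' * m) ∧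
      cohSigma Cr' Cf' HRd HFd = σ :=
  stmt19_general d nr nf B qn hd hnf hq hqn η α hCr lam hlam
end
end
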